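/- arXiv:1812.05515 — 2 statements merged into one kernel-verified Lean document; each statement's English description precedes it below -/
import Mathlib

section
/- Let 0 < β < μ and k ≥ 0, and let m1(t) = k/(μ−β) + (1 − k/(μ−β))·e^{−(μ−β)t}. Then the function m2(t) = k(k+μ)/(μ−β)² + ((μ² − 2k² − β² + kμ − 3kβ)/(μ−β)²)·e^{−(μ−β)t} + ((k² + 2β² + 3kβ − 2μβ − 2kμ)/(μ−β)²)·e^{−2(μ−β)t} satisfies m2'(t) = 2(β−μ)·m2(t) + (β + μ + 2k)·m1(t) + k for all t ≥ 0 with m2(0) = 1. -/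
open Real

theorem hasDerivAt_exp_const_mul (r t : ℝ) :
    HasDerivAt (fun t => exp (r * t)) (r * exp (r * t)) t := by
  simpa [mul_comm] using ((hasDerivAt_id t).const_mul r).exp

theorem hasDerivAt_const_add_two_exp (a b d c t : ℝ) :
    HasDerivAt (fun t => a + b * exp (-c * t) + d * exp (-2 * c * t))
      (-c * b * exp (-c * t) - 2 * c * d * exp (-2 * c * t)) t := by
  have h := ((hasDerivAt_const t a).add ((hasDerivAt_exp_const_mul (-c) t).const_mul b)).add
    ((hasDerivAt_exp_const_mul (-2 * c) t).const_mul d)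
  exact h.congr_deriv (by ring)

theorem stmt_2_general (β μ k : ℝ) (hβμ : β < μ) :
    let m1 : ℝ → ℝ := fun t => k / (μ - β) + (1 - k / (μ - β)) * Real.exp (-(μ - β) * t)
    let m2 : ℝ → ℝ := fun t =>
      k * (k + μ) / (μ - β) ^ 2
        + (μ ^ 2 - 2 * k ^ 2 - β ^ 2 + k * μ - 3 * k * β) / (μ - β) ^ 2 * Real.exp (-(μ - β) * t)
        + (k ^ 2 + 2 * β ^ 2 + 3 * k * β - 2 * μ * β - 2 * k * μ) / (μ - β) ^ 2
            * Real.exp (-2 * (μ - β) * t)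
    (∀ t : ℝ, t ≥ 0 →
        HasDerivAt m2 (2 * (β - μ) * m2 t + (β + μ + 2 * k) * m1 t + k) t) ∧ m2 0 = 1 := by
  intro m1 m2
  have hc : μ - β ≠ 0 := sub_ne_zero.mpr hβμ.ne'
  refine ⟨fun t _ => (hasDerivAt_const_add_two_exp _ _ _ (μ - β) t).congr_deriv ?_, ?_⟩
  · simp only [m1, m2]
    field_simp
    ring
  · simp only [m2, mul_zero, exp_zero, mul_one]
    field_simp
    ring

/-- The second moment of the Galton–Watson process with immigration
(duplication rate `β`, death rate `μ`, immigration rate `k`, `0 < β < μ`,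
one initial particle) satisfies `m2' = 2(β-μ) m2 + (β+μ+2k) m1 + k`, `m2 0 = 1`,
where `m1` is the first moment. -/
theorem stmt_2 (β μ k : ℝ) (hβ : 0 < β) (hβμ : β < μ) (hk : 0 ≤ k) :
    let m1 : ℝ → ℝ := fun t => k / (μ - β) + (1 - k / (μ - β)) * Real.exp (-(μ - β) * t)
    let m2 : ℝ → ℝ := fun t =>
      k * (k + μ) / (μ - β) ^ 2
        + (μ ^ 2 - 2 * k ^ 2 - β ^ 2 + k * μ - 3 * k * β) / (μ - β) ^ 2 * Real.exp (-(μ - β) * t)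
        + (k ^ 2 + 2 * β ^ 2 + 3 * k * β - 2 * μ * β - 2 * k * μ) / (μ - β) ^ 2
            * Real.exp (-2 * (μ - β) * t)
    (∀ t : ℝ, t ≥ 0 →
        HasDerivAt m2 (2 * (β - μ) * m2 t + (β + μ + 2 * k) * m1 t + k) t) ∧ m2 0 = 1 :=
  stmt_2_general β μ k hβμ
end

section
/- Fix 0 < β < μ. For k > 0 define a_n(k) = (β/μ)^n · Γ(k/β + n)/(Γ(k/β)·n!), n0(k) = ⌊k/(μ−β)⌋, and σ_k² = μk/(μ−β)². Then as k → ∞, a_{n0(k)}(k) · √(2π σ_k²) · ((μ−β)/μ)^{k/β} → 1; equivalently a_{n0(k)}(k) ∼ (1/√(2π σ_k²))·(μ/(μ−β))^{k/β}. -/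
/-!
With `p = β/μ` and `r = k/β`, `a_n(k) = p^n Γ(r+n)/(Γ(r) n!)` is a negative binomial weight with
mean `B = rp/(1-p)`, and `n0(k) = ⌊B⌋`. Stirling's formula
`log Γ(x) = (x - 1/2) log x - x + log(2π)/2 + o(1)`, applied to `Γ(r+n)`, `Γ(r)` and `Γ(n+1)`, turns
the logarithm of the normalised weight into `J(A, r+n) - J(B, n+1) + o(1)`, where `A = r/(1-p)` and
`J(A, u) = (u - 1/2) log(u/A) - (u - A)`. Since `1 - A/u ≤ log(u/A) ≤ u/A - 1`, `J(A, u) → 0` as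
`A → ∞` with `u - A` bounded. Stirling's formula at real arguments follows from the factorial
version by the log-convexity of `Γ` between consecutive integers.
-/

open Real Filter Topology
open scoped Nat

theorem tendsto_add_mul_log_div_sub_sub {ι : Type*} {l : Filter ι} {u A : ι → ℝ} (c C : ℝ)
    (hA : Tendsto A l atTop) (hu : ∀ᶠ i in l, |u i - A i| ≤ C) :
    Tendsto (fun i => (u i + c) * log (u i / A i) - (u i - A i)) l (𝓝 0) := by
  have hbdd : IsBoundedUnder (· ≤ ·) l (norm ∘ fun i => u i - A i) :=
    isBoundedUnder_of_eventually_le (a := C) (by simpa only [Function.comp_apply, norm_eq_abs])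
  set t : ι → ℝ := fun i => (u i - A i) / A i
  have ht : Tendsto t l (𝓝 0) :=
    (isBoundedUnder_le_mul_tendsto_zero hbdd hA.inv_tendsto_atTop).congr fun i =>
      (div_eq_mul_inv _ _).symm
  have hupper : Tendsto (fun i => (u i - A i + c) * t i) l (𝓝 0) := by
    simpa only [add_mul, mul_zero, add_zero] using
      (isBoundedUnder_le_mul_tendsto_zero hbdd ht).add (ht.const_mul c)
  have hlower : Tendsto (fun i => c * (t i / (1 + t i))) l (𝓝 0) := by
    simpa using (ht.div (tendsto_const_nhds.add ht) (by norm_num)).const_mul c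
  have hpos : ∀ᶠ i in l, 0 < A i ∧ 0 < u i ∧ 0 ≤ u i + c := by
    filter_upwards [hu, hA.eventually_ge_atTop (C + |c| + 1)] with i hCi hAi
    have := abs_le.1 hCi
    have := abs_nonneg (u i - A i)
    have := abs_nonneg c
    have := neg_abs_le c
    exact ⟨by linarith, by linarith, by linarith⟩
  refine tendsto_of_tendsto_of_tendsto_of_le_of_le' hlower hupper ?_ ?_
  · filter_upwards [hpos] with i ⟨hA0, hu0, huc⟩
    calc c * (t i / (1 + t i)) = (u i + c) * (1 - (u i / A i)⁻¹) - (u i - A i) := by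
          simp only [t]; field_simp [hu0.ne']; ring
      _ ≤ _ := by gcongr; exact one_sub_inv_le_log_of_pos (div_pos hu0 hA0)
  · filter_upwards [hpos] with i ⟨hA0, hu0, huc⟩
    calc _ ≤ (u i + c) * (u i / A i - 1) - (u i - A i) := by
          gcongr; exact log_le_sub_one_of_pos (div_pos hu0 hA0)
      _ = (u i - A i + c) * t i := by simp only [t]; field_simp; ring

noncomputable def logGammaStirling (x : ℝ) : ℝ := (x - 1 / 2) * log x - x + log (2 * π) / 2

theorem log_Gamma_nat_sub_logGammaStirling {n : ℕ} (hn : n ≠ 0) :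
    log (Gamma n) - logGammaStirling n = log (Stirling.stirlingSeq n / √π) := by
  have hn0 : (0 : ℝ) < n := by positivity
  have hΓ : Gamma n = n ! / n := by
    rw [eq_div_iff hn0.ne', mul_comm, ← Gamma_add_one hn0.ne', Gamma_nat_eq_factorial]
  rw [hΓ, Stirling.stirlingSeq, logGammaStirling, log_div (by positivity) hn0.ne',
    log_div (by positivity) (by positivity), log_div (by positivity) (by positivity),
    log_mul (x := √(2 * n)) (by positivity) (by positivity), log_sqrt (x := 2 * n) (by positivity),
    log_sqrt pi_pos.le, log_pow, log_div hn0.ne' (exp_pos 1).ne', log_exp,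
    log_mul two_ne_zero hn0.ne', log_mul two_ne_zero pi_ne_zero]
  ring

theorem tendsto_log_Gamma_nat_sub_logGammaStirling :
    Tendsto (fun n : ℕ => log (Gamma n) - logGammaStirling n) atTop (𝓝 0) := by
  have hπ : √π ≠ 0 := by positivity
  have h := (Stirling.tendsto_stirlingSeq_sqrt_pi.div_const √π).log (by simp [hπ])
  rw [div_self hπ, log_one] at h
  refine h.congr' ?_
  filter_upwards [eventually_ne_atTop 0] with n hn
  exact (log_Gamma_nat_sub_logGammaStirling hn).symm

theorem logGammaStirling_sub_sub_mul_log {x y : ℝ} (hx : 0 < x) (hy : 0 < y) :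
    logGammaStirling x - logGammaStirling y - (x - y) * log y
      = (x - 1 / 2) * log (x / y) - (x - y) := by
  rw [logGammaStirling, logGammaStirling, log_div hx.ne' hy.ne']
  ring

theorem log_Gamma_add_one {y : ℝ} (hy : 0 < y) : log (Gamma (y + 1)) = log (Gamma y) + log y := by
  rw [Gamma_add_one hy.ne', log_mul hy.ne' (Gamma_pos_of_pos hy).ne', add_comm]

theorem tendsto_log_Gamma_sub_logGammaStirling :
    Tendsto (fun x => log (Gamma x) - logGammaStirling x) atTop (𝓝 0) := by
  set N : ℝ → ℕ := fun x => ⌈x⌉₊ - 1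
  have hN : Tendsto N atTop atTop := (tendsto_sub_atTop_nat 1).comp tendsto_nat_ceil_atTop
  have hNR : Tendsto (fun x => (N x : ℝ)) atTop atTop := tendsto_natCast_atTop_atTop.comp hN
  have hsplit : ∀ᶠ x in atTop, 2 ≤ N x ∧ (N x : ℝ) < x ∧ x ≤ N x + 1 := by
    filter_upwards [eventually_gt_atTop 2] with x hx
    have hc : 3 ≤ ⌈x⌉₊ := Nat.lt_ceil.2 (by exact_mod_cast hx)
    have hcast : (N x : ℝ) = ⌈x⌉₊ - 1 := by
      simp only [N]; push_cast [Nat.one_le_of_lt hc]; ring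
    refine ⟨by simp only [N]; omega, ?_, ?_⟩ <;> rw [hcast]
    · linarith [Nat.ceil_lt_add_one (by linarith : (0 : ℝ) ≤ x)]
    · linarith [Nat.le_ceil x]
  -- log-convexity of `Gamma` squeezes the increment from `N x` to `x`
  have hM : Tendsto (fun x => log (Gamma x) - log (Gamma (N x)) - (x - N x) * log (N x))
      atTop (𝓝 0) := by
    refine tendsto_of_tendsto_of_tendsto_of_le_of_le'
      ((tendsto_log_comp_add_sub_log (-1)).comp hNR) tendsto_const_nhds ?_ ?_ <;>
    filter_upwards [hsplit] with x ⟨h2, hlt, hle⟩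
    · have h := BohrMollerup.f_add_nat_ge convexOn_log_Gamma log_Gamma_add_one h2 (sub_pos.2 hlt)
      have h1 : (1 : ℝ) < N x := by exact_mod_cast h2
      have hlog : log (N x + -1) ≤ log (N x) := log_le_log (by linarith) (by linarith)
      simp only [Function.comp_apply, add_sub_cancel] at h ⊢
      rw [← sub_eq_add_neg] at hlog ⊢
      nlinarith
    · have h := BohrMollerup.f_add_nat_le (n := N x) convexOn_log_Gamma log_Gamma_add_one
        (by omega) (sub_pos.2 hlt) (by linarith)
      simp only [Function.comp_apply, add_sub_cancel] at h
      linarith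
  have hJ := tendsto_add_mul_log_div_sub_sub (u := id) (-1 / 2) 1 hNR (by
    filter_upwards [hsplit] with x ⟨_, hlt, hle⟩
    rw [abs_le]; constructor <;> simp only [id] <;> linarith)
  have hE := tendsto_log_Gamma_nat_sub_logGammaStirling.comp hN
  have := (hE.add hM).sub hJ
  rw [add_zero, sub_zero] at this
  refine this.congr' ?_
  filter_upwards [hsplit] with x ⟨h2, hlt, _⟩
  have hN0 : (0 : ℝ) < N x := by exact_mod_cast (by omega : 0 < N x)
  have := logGammaStirling_sub_sub_mul_log (hN0.trans hlt) hN0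
  simp only [Function.comp_apply, id]
  linarith

theorem log_negBinomial_mul_sqrt_mul_rpow {p r : ℝ} (hp0 : 0 < p) (hp1 : p < 1) (hr : 0 < r)
    (n : ℕ) :
    log (p ^ n * Gamma (r + n) / (Gamma r * n !) * √(2 * π * (r * p / (1 - p) ^ 2))
        * (1 - p) ^ r)
      = n * log p + log (Gamma (r + n)) - log (Gamma r) - log (Gamma (n + 1))
        + log (2 * π * (r * p / (1 - p) ^ 2)) / 2 + r * log (1 - p) := by
  have hq : 0 < 1 - p := sub_pos.2 hp1
  have hΓ : 0 < Gamma (r + n) := Gamma_pos_of_pos (by positivity)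
  rw [← Gamma_nat_eq_factorial, log_mul (by positivity) (by positivity),
    log_mul (by positivity) (by positivity), log_div (by positivity) (by positivity),
    log_mul (by positivity) hΓ.ne', log_mul (Gamma_pos_of_pos hr).ne' (by positivity),
    log_pow, log_sqrt (by positivity), log_rpow hq]
  ring

theorem negBinomial_logGammaStirling_eq {p r n : ℝ} (hp0 : 0 < p) (hp1 : p < 1) (hr : 0 < r)
    (hn : 0 ≤ n) :
    n * log p + logGammaStirling (r + n) - logGammaStirling r - logGammaStirling (n + 1)
        + log (2 * π * (r * p / (1 - p) ^ 2)) / 2 + r * log (1 - p)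
      = ((r + n - 1 / 2) * log ((r + n) / (r / (1 - p))) - (r + n - r / (1 - p)))
        - ((n + 1 - 1 / 2) * log ((n + 1) / (r * p / (1 - p))) - (n + 1 - r * p / (1 - p))) := by
  have hq : 0 < 1 - p := sub_pos.2 hp1
  have hmean : r / (1 - p) - r * p / (1 - p) = r := by field_simp
  have hA : log ((r + n) / (r / (1 - p))) = log (r + n) - log r + log (1 - p) := by
    rw [log_div (by positivity) (by positivity), log_div hr.ne' hq.ne']; ring
  have hB : log ((n + 1) / (r * p / (1 - p))) = log (n + 1) - log r - log p + log (1 - p) := by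
    rw [log_div (by positivity) (by positivity), log_div (by positivity) hq.ne',
      log_mul hr.ne' hp0.ne']; ring
  have hσ : log (2 * π * (r * p / (1 - p) ^ 2))
      = log (2 * π) + log r + log p - 2 * log (1 - p) := by
    rw [log_mul (by positivity) (by positivity), log_div (by positivity) (by positivity),
      log_mul hr.ne' hp0.ne', log_pow]; push_cast; ring
  rw [logGammaStirling, logGammaStirling, logGammaStirling, hA, hB, hσ]
  linear_combination -hmean

theorem tendsto_negBinomial_mul_sqrt_mul_rpow {p C : ℝ} (hp0 : 0 < p) (hp1 : p < 1)
    {n : ℝ → ℕ} (hn : ∀ᶠ r in atTop, |(n r : ℝ) - r * p / (1 - p)| ≤ C) :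
    Tendsto (fun r => p ^ n r * Gamma (r + n r) / (Gamma r * (n r)!)
      * √(2 * π * (r * p / (1 - p) ^ 2)) * (1 - p) ^ r) atTop (𝓝 1) := by
  have hq : 0 < 1 - p := sub_pos.2 hp1
  have hA : Tendsto (fun r : ℝ => r / (1 - p)) atTop atTop := tendsto_id.atTop_div_const hq
  have hB : Tendsto (fun r : ℝ => r * p / (1 - p)) atTop atTop :=
    (tendsto_id.atTop_mul_const hp0).atTop_div_const hq
  have hnR : Tendsto (fun r => (n r : ℝ)) atTop atTop := by
    refine tendsto_atTop_mono' atTop ?_ (tendsto_atTop_add_const_right _ (-C) hB)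
    filter_upwards [hn] with r hr
    linarith [(abs_le.1 hr).1]
  have hE := ((tendsto_log_Gamma_sub_logGammaStirling.comp (tendsto_id.atTop_add_atTop hnR)).sub
    tendsto_log_Gamma_sub_logGammaStirling).sub
    (tendsto_log_Gamma_sub_logGammaStirling.comp (tendsto_atTop_add_const_right _ 1 hnR))
  have hJA := tendsto_add_mul_log_div_sub_sub (u := fun r => r + n r) (-1 / 2) C hA (by
    filter_upwards [hn] with r hr
    convert hr using 2; field_simp; ring)
  have hJB := tendsto_add_mul_log_div_sub_sub (u := fun r => n r + 1) (-1 / 2) (C + 1) hB (by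
    filter_upwards [hn] with r hr
    calc _ = |((n r : ℝ) - r * p / (1 - p)) + 1| := by ring_nf
      _ ≤ C + 1 := (abs_add_le _ _).trans (by simpa using hr))
  have hlog := (hE.add hJA).sub hJB
  rw [sub_zero, sub_zero, add_zero, sub_zero] at hlog
  have hexp := (continuous_exp.tendsto 0).comp hlog
  rw [exp_zero] at hexp
  refine hexp.congr' ?_
  filter_upwards [eventually_gt_atTop 0] with r hr
  have hstirling := negBinomial_logGammaStirling_eq hp0 hp1 hr (n r).cast_nonneg
  refine Eq.trans ?_ (exp_log ?_)
  · rw [log_negBinomial_mul_sqrt_mul_rpow hp0 hp1 hr]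
    simp only [Function.comp_apply, id]
    congr 1
    linear_combination -hstirling
  · have := Gamma_pos_of_pos hr
    positivity

/-- Asymptotics of the invariant weight at the mode: for `0 < β < μ`, with
`a_n(k) = (β/μ)^n Γ(k/β+n)/(Γ(k/β) n!)`, `n0(k) = ⌊k/(μ-β)⌋` and
`σ_k² = μk/(μ-β)²`, one has
`a_{n0(k)}(k) √(2π σ_k²) ((μ-β)/μ)^{k/β} → 1` as `k → ∞`. -/
theorem stmt_8 (β μ : ℝ) (hβ : 0 < β) (hβμ : β < μ) :
    let a : ℝ → ℕ → ℝ := fun k n =>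
      (β / μ) ^ n * Real.Gamma (k / β + n) / (Real.Gamma (k / β) * (n.factorial : ℝ))
    let n0 : ℝ → ℕ := fun k => ⌊k / (μ - β)⌋₊
    let σsq : ℝ → ℝ := fun k => μ * k / (μ - β) ^ 2
    Filter.Tendsto
      (fun k : ℝ => a k (n0 k) * Real.sqrt (2 * Real.pi * σsq k) * ((μ - β) / μ) ^ (k / β))
      Filter.atTop (nhds 1) := by
  intro a n0 σsq
  have hμ : 0 < μ := hβ.trans hβμ
  have hp0 : 0 < β / μ := div_pos hβ hμ
  have hp1 : β / μ < 1 := (div_lt_one hμ).2 hβμ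
  have hq : 1 - β / μ = (μ - β) / μ := by field_simp
  have hmean : ∀ k, k / β * (β / μ) / ((μ - β) / μ) = k / (μ - β) := fun k => by
    field_simp
  have hvar : ∀ k, k / β * (β / μ) / ((μ - β) / μ) ^ 2 = μ * k / (μ - β) ^ 2 := fun k => by
    field_simp
  have hfloor : ∀ᶠ r in atTop,
      |(⌊r * (β / μ) / (1 - β / μ)⌋₊ : ℝ) - r * (β / μ) / (1 - β / μ)| ≤ 1 := by
    filter_upwards [eventually_ge_atTop 0] with r hr
    have h0 : 0 ≤ r * (β / μ) / (1 - β / μ) := by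
      have := sub_pos.2 hp1
      positivity
    rw [abs_le]
    constructor <;> linarith [Nat.floor_le h0, Nat.lt_floor_add_one (r * (β / μ) / (1 - β / μ))]
  refine ((tendsto_negBinomial_mul_sqrt_mul_rpow hp0 hp1 hfloor).comp
    (tendsto_id.atTop_div_const hβ)).congr fun k => ?_
  simp only [Function.comp_apply, id, hq, hmean, hvar, a, n0, σsq]
end
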